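/- Let f, g, ψ, φ be continuous compactly supported functions ℝ^d → ℂ. Then the continuous Gabor transforms satisfy the orthogonality relation ∫_{ℝ^d} ∫_{ℝ^d} 𝒢_ψf(x,w)·conj(𝒢_φg(x,w)) dw dx = ⟨φ,ψ⟩ · ⟨f,g⟩, where ⟨f,g⟩ = ∫_{ℝ^d} f(y)·conj(g(y)) dy. -/

import Mathlib

/-!
For fixed `x`, `w ↦ 𝒢_ψ f (x, w)` is the Fourier transform of `f · conj (ψ (· - x))`, so
Parseval's identity turns the inner integral into `∫ f(y) conj (g y) φ(y - x) conj (ψ (y - x)) dy`;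
integrating in `x` then factors the result as `⟨φ, ψ⟩ ⟨f, g⟩`, as for the total mass of a
convolution.

Parseval's identity for continuous compactly supported `f, g` is Fourier inversion at `0` for
`h = f ⋆ g̃`, where `g̃ y = conj (g (-y))` and `𝓕 h = 𝓕 f · conj (𝓕 g)`. Inversion needs `𝓕 h`
integrable, which follows from the integrability of `|𝓕 f|² = 𝓕 (f ⋆ f̃)`: a nonnegative Fourier
transform of an integrable function continuous at `0` is integrable, by Fatou's lemma along Gaussian
dampings, whose integrals tend to `(f ⋆ f̃) 0`.
-/

open MeasureTheory Complex Filter Real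
open scoped RealInnerProductSpace FourierTransform Convolution Topology ComplexOrder
  ComplexConjugate

theorem lintegral_enorm_eq_enorm_integral_of_nonneg {α : Type*} [MeasurableSpace α]
    {μ : Measure α} {F : α → ℂ} (hF : Integrable F μ) (hpos : ∀ a, 0 ≤ F a) :
    ∫⁻ a, ‖F a‖ₑ ∂μ = ‖∫ a, F a ∂μ‖ₑ := by
  have hF_eq : ∫ a, F a ∂μ = ((∫ a, ‖F a‖ ∂μ : ℝ) : ℂ) :=
    (integral_congr_ae (ae_of_all _ fun a => eq_coe_norm_of_nonneg (hpos a))).trans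
      integral_ofReal
  rw [← ofReal_integral_norm_eq_lintegral_enorm hF, hF_eq, ← ofReal_norm, norm_real,
    Real.norm_of_nonneg (integral_nonneg fun _ => norm_nonneg _)]

theorem integral_integral_mul_comp_sub {G : Type*} [AddGroup G] [MeasurableSpace G]
    [MeasurableAdd₂ G] [MeasurableNeg G] {μ : Measure G} [SFinite μ] [μ.IsAddRightInvariant]
    [μ.IsNegInvariant] {F Φ : G → ℂ} (hF : Integrable F μ) (hΦ : Integrable Φ μ) :
    ∫ x, ∫ y, F y * Φ (y - x) ∂μ ∂μ = (∫ y, Φ y ∂μ) * ∫ y, F y ∂μ := by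
  have hconv : ∀ x, ∫ y, F y * Φ (y - x) ∂μ =
      (F ⋆[ContinuousLinearMap.mul ℂ ℂ, μ] fun z => Φ (-z)) x := fun x => by
    simp [convolution_mul]
  simp_rw [hconv]
  rw [integral_convolution (L := ContinuousLinearMap.mul ℂ ℂ) hF hΦ.comp_neg,
    integral_neg_eq_self, ContinuousLinearMap.mul_apply', mul_comm]

section Fourier

variable {V : Type*} [NormedAddCommGroup V] [InnerProductSpace ℝ V]
  [MeasurableSpace V] [BorelSpace V] [FiniteDimensional ℝ V]

theorem MeasureTheory.Integrable.continuous_fourier {f : V → ℂ} (hf : Integrable f) :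
    Continuous (𝓕 f) :=
  VectorFourier.fourierIntegral_continuous Real.continuous_fourierChar continuous_inner hf

namespace Real

theorem conj_fourier (g : V → ℂ) (w : V) :
    conj (𝓕 g w) = 𝓕 (fun y => conj (g (-y))) w := by
  rw [← fourierInv_eq_fourier_comp_neg (fun y => conj (g y)), fourierInv_eq, fourier_eq,
    ← integral_conj]
  congr 1 with v
  simp [Circle.smul_def, ← Circle.coe_inv_eq_conj, AddChar.map_neg_eq_inv]

theorem integral_cexp_neg_mul_sq_norm_mul_fourier {k : V → ℂ} (hk : Integrable k) {c : ℝ}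
    (hc : 0 < c) :
    ∫ w, cexp (-(c : ℂ)⁻¹ * ‖w‖ ^ 2) * 𝓕 k w =
      ∫ x, ((π * c : ℂ) ^ (Module.finrank ℝ V / 2 : ℂ) *
        cexp (-π ^ 2 * c * ‖(0 : V) - x‖ ^ 2)) • k x := by
  have hb : 0 < ((c : ℂ)⁻¹).re := by simpa using hc
  have hgauss : Integrable fun w : V => cexp (-(c : ℂ)⁻¹ * ‖w‖ ^ 2) := by
    simpa using GaussianFourier.integrable_cexp_neg_mul_sq_norm_add hb 0 (0 : V)
  have := VectorFourier.integral_fourierIntegral_smul_eq_flip (L := innerₗ V)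
    Real.continuous_fourierChar continuous_inner hk hgauss
  simp only [smul_eq_mul, flip_innerₗ] at this
  simp_rw [mul_comm (cexp _)]
  refine this.trans (integral_congr_ae (ae_of_all _ fun x => ?_))
  change k x * 𝓕 (fun w : V => cexp (-(c : ℂ)⁻¹ * ‖w‖ ^ 2)) x = _
  simp only [fourier_gaussian_innerProductSpace hb, smul_eq_mul, zero_sub, norm_neg,
    div_inv_eq_mul]
  ring_nf

theorem integrable_fourier_of_nonneg {k : V → ℂ} (hk : Integrable k) (hk0 : ContinuousAt k 0)
    (hpos : ∀ w, 0 ≤ 𝓕 k w) : Integrable (𝓕 k) := by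
  set G : ℝ → V → ℂ := fun c w => cexp (-(c : ℂ)⁻¹ * ‖w‖ ^ 2) * 𝓕 k w
  have hcont : Continuous (𝓕 k) := hk.continuous_fourier
  have hG_int : ∀ c > 0, Integrable (G c) := by
    intro c hc
    have hb : 0 < ((c : ℂ)⁻¹).re := by simpa using hc
    refine Integrable.mul_bdd (c := ∫ v, ‖k v‖) ?_ hcont.aestronglyMeasurable
      (ae_of_all _ fun w => VectorFourier.norm_fourierIntegral_le_integral_norm _ _ _ _ _)
    simpa using GaussianFourier.integrable_cexp_neg_mul_sq_norm_add hb 0 (0 : V)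
  have hG_nonneg : ∀ c w, 0 ≤ G c w := by
    intro c w
    refine mul_nonneg ?_ (hpos w)
    have : cexp (-(c : ℂ)⁻¹ * ‖w‖ ^ 2) = (Real.exp (-c⁻¹ * ‖w‖ ^ 2) : ℂ) := by push_cast; rfl
    exact this ▸ zero_le_real.2 (Real.exp_pos _).le
  have hG_tendsto : ∀ w, Tendsto (fun c => G c w) atTop (𝓝 (𝓕 k w)) := by
    intro w
    have : Tendsto (fun c : ℝ => cexp (-(c : ℂ)⁻¹ * ‖w‖ ^ 2)) atTop (𝓝 1) := by
      simpa using (tendsto_inv_atTop_zero.ofReal.neg.mul_const ((‖w‖ : ℂ) ^ 2)).cexp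
    simpa only [one_mul] using this.mul_const (𝓕 k w)
  have hlim : Tendsto (fun c => ∫ w, G c w) atTop (𝓝 (k 0)) := by
    refine (tendsto_integral_gaussian_smul' hk hk0).congr' ?_
    filter_upwards [Ioi_mem_atTop 0] with c hc
    exact (integral_cexp_neg_mul_sq_norm_mul_fourier hk hc).symm
  refine ⟨hcont.aestronglyMeasurable, ?_⟩
  calc ∫⁻ w, ‖𝓕 k w‖ₑ = ∫⁻ w, liminf (fun c => ‖G c w‖ₑ) atTop := by
        congr 1 with w
        exact ((hG_tendsto w).enorm.liminf_eq).symm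
    _ ≤ liminf (fun c => ∫⁻ w, ‖G c w‖ₑ) atTop :=
        lintegral_liminf_le' fun c =>
          ((by fun_prop : Continuous fun w : V => cexp (-(c : ℂ)⁻¹ * ‖w‖ ^ 2)).mul
            hcont).aemeasurable.enorm
    _ = ‖k 0‖ₑ := by
        refine Tendsto.liminf_eq (hlim.enorm.congr' ?_)
        filter_upwards [Ioi_mem_atTop 0] with c hc
        exact (lintegral_enorm_eq_enorm_integral_of_nonneg (hG_int c hc) (hG_nonneg c)).symm
    _ < ⊤ := enorm_lt_top

section Parseval

variable {f g : V → ℂ}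

theorem integrable_conj_comp_neg (hg : Integrable g) : Integrable fun y => conj (g (-y)) :=
  conjLIE.integrable_comp_iff.2 hg.comp_neg

theorem fourier_convolution_conj_neg (hf : Integrable f) (hg : Integrable g) (w : V) :
    𝓕 (f ⋆[ContinuousLinearMap.mul ℂ ℂ] fun y => conj (g (-y))) w = 𝓕 f w * conj (𝓕 g w) := by
  rw [fourier_mul_convolution_eq hf (integrable_conj_comp_neg hg), conj_fourier]

theorem continuous_convolution_conj_neg (hf : Integrable f) (hg : Continuous g)
    (hgs : HasCompactSupport g) :
    Continuous (f ⋆[ContinuousLinearMap.mul ℂ ℂ] fun y => conj (g (-y))) :=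
  ((hgs.comp_left (map_zero _)).comp_homeomorph (Homeomorph.neg V)).continuous_convolution_right
    _ hf.locallyIntegrable (continuous_conj.comp (hg.comp continuous_neg))

theorem convolution_conj_neg_zero :
    (f ⋆[ContinuousLinearMap.mul ℂ ℂ] fun y => conj (g (-y))) 0 = ∫ y, f y * conj (g y) := by
  simp [convolution_mul]

theorem integrable_fourier_mul_conj_self (hf : Continuous f) (hfs : HasCompactSupport f) :
    Integrable fun w => 𝓕 f w * conj (𝓕 f w) := by
  have hfi : Integrable f := hf.integrable_of_hasCompactSupport hfs
  simp_rw [← fourier_convolution_conj_neg hfi hfi]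
  refine integrable_fourier_of_nonneg (hfi.integrable_convolution _ (integrable_conj_comp_neg hfi))
    (continuous_convolution_conj_neg hfi hf hfs).continuousAt fun w => ?_
  rw [fourier_convolution_conj_neg hfi hfi]
  exact mul_star_self_nonneg _

theorem integrable_fourier_mul_conj (hf : Continuous f) (hfs : HasCompactSupport f)
    (hg : Continuous g) (hgs : HasCompactSupport g) :
    Integrable fun w => 𝓕 f w * conj (𝓕 g w) := by
  refine ((integrable_fourier_mul_conj_self hf hfs).norm.add
    (integrable_fourier_mul_conj_self hg hgs).norm).mono'
    ((hf.integrable_of_hasCompactSupport hfs).continuous_fourier.mul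
      (continuous_conj.comp (hg.integrable_of_hasCompactSupport hgs).continuous_fourier)
      ).aestronglyMeasurable (ae_of_all _ fun w => ?_)
  simp only [norm_mul, RCLike.norm_conj, Pi.add_apply]
  nlinarith [sq_nonneg (‖𝓕 f w‖ - ‖𝓕 g w‖)]

theorem integral_fourier_mul_conj (hf : Continuous f) (hfs : HasCompactSupport f)
    (hg : Continuous g) (hgs : HasCompactSupport g) :
    ∫ w, 𝓕 f w * conj (𝓕 g w) = ∫ y, f y * conj (g y) := by
  have hfi : Integrable f := hf.integrable_of_hasCompactSupport hfs
  have hgi : Integrable g := hg.integrable_of_hasCompactSupport hgs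
  set h := f ⋆[ContinuousLinearMap.mul ℂ ℂ] fun y => conj (g (-y))
  have hFh : 𝓕 h = fun w => 𝓕 f w * conj (𝓕 g w) :=
    funext (fourier_convolution_conj_neg hfi hgi)
  calc ∫ w, 𝓕 f w * conj (𝓕 g w) = 𝓕⁻ (𝓕 h) 0 := by simp [hFh, fourierInv_eq]
    _ = h 0 := (hfi.integrable_convolution _ (integrable_conj_comp_neg hgi)).fourierInv_fourier_eq
        (hFh ▸ integrable_fourier_mul_conj hf hfs hg hgs)
        (continuous_convolution_conj_neg hfi hg hgs).continuousAt
    _ = ∫ y, f y * conj (g y) := convolution_conj_neg_zero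

end Parseval

end Real

end Fourier

section Gabor

variable {V : Type*} [NormedAddCommGroup V] [InnerProductSpace ℝ V]
  [MeasurableSpace V] [BorelSpace V] [FiniteDimensional ℝ V]

noncomputable def gaborTransform (ψ f : V → ℂ) (x w : V) : ℂ :=
  𝓕 (fun y => f y * conj (ψ (y - x))) w

theorem gaborTransform_eq_integral (ψ f : V → ℂ) (x w : V) :
    gaborTransform ψ f x w =
      ∫ y, f y * conj (ψ (y - x)) * cexp (-(2 * π * I) * (⟪w, y⟫ : ℝ)) := by
  rw [gaborTransform, Real.fourier_eq']
  congr 1 with y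
  rw [smul_eq_mul, mul_comm, real_inner_comm]
  push_cast
  ring_nf

theorem integral_gaborTransform_mul_conj {f g ψ φ : V → ℂ} (hf : Continuous f)
    (hfs : HasCompactSupport f) (hg : Continuous g) (hgs : HasCompactSupport g)
    (hψ : Continuous ψ) (hφ : Continuous φ) (x : V) :
    ∫ w, gaborTransform ψ f x w * conj (gaborTransform φ g x w) =
      ∫ y, f y * conj (g y) * (φ (y - x) * conj (ψ (y - x))) := by
  have hconj {u : V → ℂ} (hu : Continuous u) : Continuous fun y => conj (u (y - x)) :=
    continuous_conj.comp (hu.comp (continuous_sub_right x))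
  refine (Real.integral_fourier_mul_conj (f := fun y => f y * conj (ψ (y - x)))
    (g := fun y => g y * conj (φ (y - x))) (hf.mul (hconj hψ)) hfs.mul_right
    (hg.mul (hconj hφ)) hgs.mul_right).trans ?_
  congr 1 with y
  simp only [map_mul, conj_conj]
  ring

end Gabor

theorem gabor_orthogonality_euclidean_general {d : ℕ}
    (f g ψ φ : EuclideanSpace ℝ (Fin d) → ℂ)
    (hf_cont : Continuous f) (hf_supp : HasCompactSupport f)
    (hg_cont : Continuous g) (hg_supp : HasCompactSupport g)
    (hψ_cont : Continuous ψ)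
    (hφ_cont : Continuous φ) (hφ_supp : HasCompactSupport φ) :
    ∫ x : EuclideanSpace ℝ (Fin d), ∫ w : EuclideanSpace ℝ (Fin d),
        (∫ y : EuclideanSpace ℝ (Fin d),
            f y * (starRingEnd ℂ) (ψ (y - x)) *
              Complex.exp (-(2 * Real.pi * Complex.I) * (⟪w, y⟫ : ℝ))) *
          (starRingEnd ℂ) (∫ y : EuclideanSpace ℝ (Fin d),
            g y * (starRingEnd ℂ) (φ (y - x)) *
              Complex.exp (-(2 * Real.pi * Complex.I) * (⟪w, y⟫ : ℝ))) =
      (∫ y : EuclideanSpace ℝ (Fin d), φ y * (starRingEnd ℂ) (ψ y)) *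
        (∫ y : EuclideanSpace ℝ (Fin d), f y * (starRingEnd ℂ) (g y)) := by
  simp_rw [← gaborTransform_eq_integral,
    integral_gaborTransform_mul_conj hf_cont hf_supp hg_cont hg_supp hψ_cont hφ_cont]
  exact integral_integral_mul_comp_sub
    ((hf_cont.mul (continuous_conj.comp hg_cont)).integrable_of_hasCompactSupport
      (hf_supp.mul_right))
    ((hφ_cont.mul (continuous_conj.comp hψ_cont)).integrable_of_hasCompactSupport
      (hφ_supp.mul_right))

/-- For continuous compactly supported `f, g, ψ, φ : ℝ^d → ℂ`, the
continuous Gabor transforms satisfy the orthogonality relation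
`∫∫ 𝒢_ψf(x,w)·conj(𝒢_φg(x,w)) dw dx = ⟨φ,ψ⟩·⟨f,g⟩`. -/
theorem gabor_orthogonality_euclidean {d : ℕ}
    (f g ψ φ : EuclideanSpace ℝ (Fin d) → ℂ)
    (hf_cont : Continuous f) (hf_supp : HasCompactSupport f)
    (hg_cont : Continuous g) (hg_supp : HasCompactSupport g)
    (hψ_cont : Continuous ψ) (hψ_supp : HasCompactSupport ψ)
    (hφ_cont : Continuous φ) (hφ_supp : HasCompactSupport φ) :
    ∫ x : EuclideanSpace ℝ (Fin d), ∫ w : EuclideanSpace ℝ (Fin d),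
        (∫ y : EuclideanSpace ℝ (Fin d),
            f y * (starRingEnd ℂ) (ψ (y - x)) *
              Complex.exp (-(2 * Real.pi * Complex.I) * (⟪w, y⟫ : ℝ))) *
          (starRingEnd ℂ) (∫ y : EuclideanSpace ℝ (Fin d),
            g y * (starRingEnd ℂ) (φ (y - x)) *
              Complex.exp (-(2 * Real.pi * Complex.I) * (⟪w, y⟫ : ℝ))) =
      (∫ y : EuclideanSpace ℝ (Fin d), φ y * (starRingEnd ℂ) (ψ y)) *
        (∫ y : EuclideanSpace ℝ (Fin d), f y * (starRingEnd ℂ) (g y)) :=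
  gabor_orthogonality_euclidean_general f g ψ φ hf_cont hf_supp hg_cont hg_supp hψ_cont hφ_cont
    hφ_supp
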